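/- arXiv:2204.07315 — 6 statements merged into one kernel-verified Lean document; each statement's English description precedes it below -/
import Mathlib

section
/- If w : [0,1] → ℝ is concave and F̄ : [0,1] → (0,1] is log-concave, then among all cost share vectors (c₁,...,cₙ) with cᵢ ≥ 0 and ∑cᵢ = 1, the quantity F̄(c₁)·...·F̄(cₙ)·(w(c₁)+...+w(cₙ)) is maximized at c₁ = ... = cₙ = 1/n, provided w is nonnegative. -/
/-! Jensen's inequality with equal weights bounds `∑ w(cᵢ)` by `n w(1/n)`, and, applied to the
concave function `log F̄`, bounds `∏ F̄(cᵢ)` by `F̄(1/n)ⁿ`. Both factors are nonnegative, so the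
two bounds multiply. -/

open Finset

lemma Convex.sum_div_card_mem {ι : Type*} [Fintype ι] [Nonempty ι] {s : Set ℝ}
    (hs : Convex ℝ s) {c : ι → ℝ} (hc : ∀ i, c i ∈ s) :
    (∑ i, c i) / Fintype.card ι ∈ s := by
  have hcard : (0 : ℝ) < Fintype.card ι := by exact_mod_cast Fintype.card_pos
  have hmem := hs.sum_mem (t := univ) (w := fun _ => (Fintype.card ι : ℝ)⁻¹) (z := c)
    (fun _ _ => by positivity) (by simp [hcard.ne']) (fun i _ => hc i)
  rwa [← smul_sum, smul_eq_mul, inv_mul_eq_div] at hmem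

lemma ConcaveOn.sum_le_card_mul_map_mean {ι : Type*} [Fintype ι] {s : Set ℝ} {f : ℝ → ℝ}
    (hf : ConcaveOn ℝ s f) {c : ι → ℝ} (hc : ∀ i, c i ∈ s) :
    ∑ i, f (c i) ≤ Fintype.card ι * f ((∑ i, c i) / Fintype.card ι) := by
  rcases isEmpty_or_nonempty ι with hι | hι
  · simp
  have hcard : (0 : ℝ) < Fintype.card ι := by exact_mod_cast Fintype.card_pos
  have hjensen := hf.le_map_sum (t := univ) (w := fun _ => (Fintype.card ι : ℝ)⁻¹) (p := c)
    (fun _ _ => by positivity) (by simp [hcard.ne']) (fun i _ => hc i)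
  simp only [smul_eq_mul, ← mul_sum] at hjensen
  rwa [inv_mul_eq_div, inv_mul_eq_div, div_le_iff₀' hcard] at hjensen

lemma prod_le_map_mean_pow_card_of_concaveOn_log {ι : Type*} [Fintype ι] {s : Set ℝ}
    {g : ℝ → ℝ} (hg : ConcaveOn ℝ s fun x => Real.log (g x)) (hpos : ∀ x ∈ s, 0 < g x)
    {c : ι → ℝ} (hc : ∀ i, c i ∈ s) :
    ∏ i, g (c i) ≤ g ((∑ i, c i) / Fintype.card ι) ^ Fintype.card ι := by
  rcases isEmpty_or_nonempty ι with hι | hι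
  · simp
  have hmean := hg.1.sum_div_card_mem hc
  have hlog := hg.sum_le_card_mul_map_mean hc
  rw [← Real.log_pow, ← Real.log_prod (fun i _ => (hpos _ (hc i)).ne')] at hlog
  exact (Real.log_le_log_iff (prod_pos fun i _ => hpos _ (hc i))
    (pow_pos (hpos _ hmean) _)).1 hlog

theorem stmt2_general (n : ℕ) (Fbar w : ℝ → ℝ)
    (hrange : ∀ x ∈ Set.Icc (0:ℝ) 1, Fbar x ∈ Set.Ioc (0:ℝ) 1)
    (hlogconc : ConcaveOn ℝ (Set.Icc 0 1) fun x => Real.log (Fbar x))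
    (hwconc : ConcaveOn ℝ (Set.Icc 0 1) w)
    (hwnonneg : ∀ x ∈ Set.Icc (0:ℝ) 1, 0 ≤ w x)
    (c : Fin n → ℝ) (hc : ∀ i, 0 ≤ c i) (hsum : ∑ i, c i = 1) :
    (∏ i, Fbar (c i)) * (∑ i, w (c i)) ≤ Fbar (1 / n) ^ n * (n * w (1 / n)) := by
  have hmem : ∀ i, c i ∈ Set.Icc (0:ℝ) 1 := fun i =>
    ⟨hc i, hsum ▸ single_le_sum (fun j _ => hc j) (mem_univ i)⟩
  have hpos : ∀ x ∈ Set.Icc (0:ℝ) 1, 0 < Fbar x := fun x hx => (hrange x hx).1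
  have hprod := prod_le_map_mean_pow_card_of_concaveOn_log hlogconc hpos hmem
  have hw := hwconc.sum_le_card_mul_map_mean hmem
  rw [Fintype.card_fin, hsum] at hprod hw
  exact mul_le_mul hprod hw (sum_nonneg fun i _ => hwnonneg _ (hmem i))
    ((prod_pos fun i _ => hpos _ (hmem i)).le.trans hprod)

/-- If `w` is concave and nonnegative and `F̄ : [0,1] → (0,1]` is
log-concave, then among all cost share vectors with `cᵢ ≥ 0`, `∑ cᵢ = 1`, the
quantity `∏ᵢ F̄(cᵢ) · ∑ᵢ w(cᵢ)` is maximized at `cᵢ = 1/n` for all `i`. -/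
theorem stmt2 (n : ℕ) (hn : 0 < n) (Fbar w : ℝ → ℝ)
    (hrange : ∀ x ∈ Set.Icc (0:ℝ) 1, Fbar x ∈ Set.Ioc (0:ℝ) 1)
    (hlogconc : ConcaveOn ℝ (Set.Icc 0 1) fun x => Real.log (Fbar x))
    (hwconc : ConcaveOn ℝ (Set.Icc 0 1) w)
    (hwnonneg : ∀ x ∈ Set.Icc (0:ℝ) 1, 0 ≤ w x)
    (c : Fin n → ℝ) (hc : ∀ i, 0 ≤ c i) (hsum : ∑ i, c i = 1) :
    (∏ i, Fbar (c i)) * (∑ i, w (c i)) ≤ Fbar (1 / n) ^ n * (n * w (1 / n)) :=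
  stmt2_general n Fbar w hrange hlogconc hwconc hwnonneg c hc hsum
end

section
/- If f is a Lipschitz continuous probability density on [0,1], then the probability of unanimous acceptance under the conservative equal costs mechanism, namely (1 - F(1/n))ⁿ where F is the CDF of f, converges to e^{-f(0)} as n → ∞. -/
/-!
Continuity of `f` from the right at `0` makes `f 0` the right derivative of `F` at `0` (fundamental
theorem of calculus), so `n F(1/n) → f 0`, and `(1 + x_n)ⁿ → exp t` whenever `n x_n → t`.
-/

open Filter Real Set Topology

theorem HasDerivWithinAt.tendsto_nat_mul_sub_one_div {F : ℝ → ℝ} {c : ℝ}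
    (hF : HasDerivWithinAt F c (Ici 0) 0) :
    Tendsto (fun n : ℕ => (n : ℝ) * (F (1 / n) - F 0)) atTop (𝓝 c) := by
  have hslope := hasDerivWithinAt_iff_tendsto_slope.mp hF
  have hstep : Tendsto (fun n : ℕ => 1 / (n : ℝ)) atTop (𝓝[Ici 0 \ {0}] 0) := by
    refine tendsto_nhdsWithin_iff.mpr ⟨tendsto_one_div_atTop_nhds_zero_nat, ?_⟩
    filter_upwards [eventually_ge_atTop 1] with n hn
    have : (0 : ℝ) < 1 / n := by positivity
    exact ⟨this.le, this.ne'⟩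
  refine (hslope.comp hstep).congr fun n => ?_
  simp only [one_div, Function.comp_apply, slope_def_field, sub_zero, div_inv_eq_mul]
  ring

theorem ContinuousOn.hasDerivWithinAt_integral_Ici {f : ℝ → ℝ} {a b : ℝ} (hab : a < b)
    (hf : ContinuousOn f (Icc a b)) :
    HasDerivWithinAt (fun u => ∫ x in a..u, f x) (f a) (Ici a) a := by
  have hIcc : Icc a b ∈ 𝓝[>] a := Icc_mem_nhdsGT hab
  refine intervalIntegral.integral_hasDerivWithinAt_right (t := Ioi a) (by simp) ?_ ?_
  · exact (hf.stronglyMeasurableAtFilter_nhdsWithin measurableSet_Icc a).filter_mono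
      (nhdsWithin_le_of_mem hIcc)
  · exact (hf a (left_mem_Icc.mpr hab.le)).mono_of_mem_nhdsWithin hIcc

theorem stmt4_general (f : ℝ → ℝ) (K : NNReal)
    (hLip : LipschitzOnWith K f (Set.Icc 0 1)) :
    Filter.Tendsto (fun n : ℕ => (1 - ∫ x in (0:ℝ)..(1 / (n:ℝ)), f x) ^ n)
      Filter.atTop (nhds (Real.exp (-f 0))) := by
  have hF := (hLip.continuousOn.hasDerivWithinAt_integral_Ici zero_lt_one).neg
  have hlim := hF.tendsto_nat_mul_sub_one_div
  simpa [sub_eq_add_neg] using tendsto_one_add_pow_exp_of_tendsto hlim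

/-- If `f` is a Lipschitz continuous probability density on `[0,1]`,
then the probability of unanimous acceptance under the conservative equal costs
mechanism, `(1 - F(1/n))ⁿ` with `F` the CDF of `f`, converges to `exp (-f 0)`. -/
theorem stmt4 (f : ℝ → ℝ) (K : NNReal)
    (hLip : LipschitzOnWith K f (Set.Icc 0 1))
    (hnonneg : ∀ x ∈ Set.Icc (0:ℝ) 1, 0 ≤ f x)
    (hdens : ∫ x in (0:ℝ)..1, f x = 1) :
    Filter.Tendsto (fun n : ℕ => (1 - ∫ x in (0:ℝ)..(1 / (n:ℝ)), f x) ^ n)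
      Filter.atTop (nhds (Real.exp (-f 0))) :=
  stmt4_general f K hLip
end

section
/- The expected max-delay of the serial cost sharing mechanism, which equals 1 - (∫_{1/n}^1 f(x) dx)ⁿ, converges to 1 - e^{-f(0)} as n → ∞ when f is Lipschitz continuous. -/
/-!
Writing `F u = ∫₀ᵘ f`, the total mass is one, so `∫_{1/n}^1 f = 1 - F (1/n)`. By the fundamental
theorem of calculus `n F (1/n) → F' 0 = f 0`, and `(1 + gₙ)ⁿ → exp t` whenever `n gₙ → t`.
-/

open Filter Set Topology intervalIntegral

theorem tendsto_nat_mul_integral_zero_one_div {f : ℝ → ℝ} {b : ℝ} (hb : 0 < b)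
    (hf : ContinuousOn f (Icc 0 b)) :
    Tendsto (fun n : ℕ => n * ∫ x in (0:ℝ)..(1 / n), f x) atTop (𝓝 (f 0)) := by
  have hIcc : Icc 0 b ∈ 𝓝[>] (0:ℝ) := Icc_mem_nhdsGT hb
  have hmeas : StronglyMeasurableAtFilter f (𝓝[>] 0) :=
    (hf.stronglyMeasurableAtFilter_nhdsWithin measurableSet_Icc 0).filter_mono
      (nhdsWithin_le_of_mem hIcc)
  have hcont : ContinuousWithinAt f (Ioi 0) 0 :=
    (hf 0 ⟨le_rfl, hb.le⟩).mono_of_mem_nhdsWithin hIcc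
  have hderiv : HasDerivWithinAt (fun u => ∫ x in (0:ℝ)..u, f x) (f 0) (Ioi 0) 0 :=
    (integral_hasDerivWithinAt_right IntervalIntegrable.refl hmeas hcont).Ioi_of_Ici
  have hslope := (hasDerivWithinAt_iff_tendsto_slope' (lt_irrefl 0)).mp hderiv
  refine (hslope.comp (tendsto_inv_atTop_nhdsGT_zero.comp tendsto_natCast_atTop_atTop)).congr ?_
  intro n
  simp [slope_def_field, one_div, mul_comm]

theorem stmt5_general (f : ℝ → ℝ) (K : NNReal)
    (hLip : LipschitzOnWith K f (Set.Icc 0 1))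
    (hdens : ∫ x in (0:ℝ)..1, f x = 1) :
    Filter.Tendsto (fun n : ℕ => 1 - (∫ x in (1 / (n:ℝ))..1, f x) ^ n)
      Filter.atTop (nhds (1 - Real.exp (-f 0))) := by
  have hf : ContinuousOn f (Icc 0 1) := hLip.continuousOn
  have hsplit (n : ℕ) : ∫ x in (1 / (n:ℝ))..1, f x = 1 + -∫ x in (0:ℝ)..(1 / n), f x := by
    have hn_inv : 1 / (n:ℝ) ∈ Icc 0 1 := ⟨by positivity, by simpa using Nat.cast_inv_le_one n⟩
    rw [← integral_interval_sub_left (hf.intervalIntegrable_of_Icc zero_le_one)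
      ((hf.mono (Icc_subset_Icc le_rfl hn_inv.2)).intervalIntegrable_of_Icc hn_inv.1), hdens]
    ring
  have hmass := (tendsto_nat_mul_integral_zero_one_div one_pos hf).neg
  simp only [← mul_neg] at hmass
  exact tendsto_const_nhds.sub
    ((Real.tendsto_one_add_pow_exp_of_tendsto hmass).congr fun n => by rw [hsplit])

/-- The expected max-delay of the serial cost sharing mechanism,
`1 - (∫_{1/n}^1 f)ⁿ`, converges to `1 - exp (-f 0)` as `n → ∞`, for a Lipschitz
continuous positive density `f` on `[0,1]`. -/
theorem stmt5 (f : ℝ → ℝ) (K : NNReal)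
    (hLip : LipschitzOnWith K f (Set.Icc 0 1))
    (hpos : ∀ x ∈ Set.Icc (0:ℝ) 1, 0 < f x)
    (hdens : ∫ x in (0:ℝ)..1, f x = 1) :
    Filter.Tendsto (fun n : ℕ => 1 - (∫ x in (1 / (n:ℝ))..1, f x) ^ n)
      Filter.atTop (nhds (1 - Real.exp (-f 0))) :=
  stmt5_general f K hLip hdens
end

section
/- The optimal single deadline mechanism's expected max-delay approaches 0 as the number of agents approaches infinity: for every ε > 0, there exists a deadline d ≤ ε and N such that for all n ≥ N the single deadline mechanism M(d) with n agents has expected max-delay at most ε. -/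
open scoped Classical

/-- Number of agents willing to pay `1/k` given scaled values `w`. -/
noncomputable def numWilling {n : ℕ} (w : Fin n → ℝ) (k : ℕ) : ℕ :=
  (Finset.univ.filter fun i : Fin n => 1 / (k : ℝ) ≤ w i).card

/-- `K(w)`: the largest `k ∈ {1,...,n}` such that at least `k` of the values `w i`
are at least `1/k` (0 if none). -/
noncomputable def Kval {n : ℕ} (w : Fin n → ℝ) : ℕ :=
  Nat.findGreatest (fun k => k ≤ numWilling w k) n

/-- Number of agents other than `i` willing to pay `1/k`. -/
noncomputable def numWillingEx {n : ℕ} (w : Fin n → ℝ) (i : Fin n) (k : ℕ) : ℕ :=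
  ((Finset.univ.erase i).filter fun j : Fin n => 1 / (k : ℝ) ≤ w j).card

/-- `K` computed excluding agent `i`. -/
noncomputable def KvalEx {n : ℕ} (w : Fin n → ℝ) (i : Fin n) : ℕ :=
  Nat.findGreatest (fun k => k ≤ numWillingEx w i k) n

/-- Agent `i` consumes the non-free part `[0,d]` of the single deadline mechanism
`M(d)`: the cost share of the scaled values `d·v` succeeds and `i` is one of the
`K(d·v)` consumers (paying `1/K(d·v)`). -/
def nonfreeConsumer {n : ℕ} (d : ℝ) (v : Fin n → ℝ) (i : Fin n) : Prop :=
  1 ≤ Kval (fun j => d * v j) ∧ 1 / (Kval (fun j => d * v j) : ℝ) ≤ d * v i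

/-- Agent `i` receives the free part `[d,1]` iff the other agents alone can
successfully cost share the non-free part, i.e. `I(d·v₋ᵢ) = 1`. -/
def hasFreePart {n : ℕ} (d : ℝ) (v : Fin n → ℝ) (i : Fin n) : Prop :=
  1 ≤ KvalEx (fun j => d * v j) i

/-- Release time of agent `i` in `M(d)`: `0` if she receives both parts, `d` if
only the free part, `1 - d` if only the non-free part, `1` if neither. -/
noncomputable def releaseTime {n : ℕ} (d : ℝ) (v : Fin n → ℝ) (i : Fin n) : ℝ :=
  if nonfreeConsumer d v i then (if hasFreePart d v i then 0 else 1 - d)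
  else (if hasFreePart d v i then d else 1)

/-- Payment of agent `i` in `M(d)`: `1/K(d·v)` if a non-free consumer, else `0`. -/
noncomputable def payment {n : ℕ} (d : ℝ) (v : Fin n → ℝ) (i : Fin n) : ℝ :=
  if nonfreeConsumer d v i then 1 / (Kval (fun j => d * v j) : ℝ) else 0

/-- Expected max-delay of `M(d)` with `n` agents whose valuations are i.i.d. with
density `f` on `[0,1]`. -/
noncomputable def expectedMaxDelay (f : ℝ → ℝ) (n : ℕ) (d : ℝ) : ℝ :=
  ∫ v in (Set.univ.pi fun _ : Fin n => Set.Icc (0:ℝ) 1),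
    (⨆ i, releaseTime d v i) * ∏ i, f (v i)

/-!
Fix a deadline `d` and a price level `1/k ≤ d/2`. If more than `k` agents have value at least
`1/2`, then for every agent the others alone afford the non-free part at price `1/k`, so everybody
gets the free part `[d,1]` and the max-delay is at most `d`; otherwise the max-delay is at most `1`.
The bad event is covered by the `choose n (n-k)` events "all agents of `S` have value below `1/2`"
(`#S = n - k`), each of probability `q^(n-k)` with `q = P(v < 1/2) < 1`, and this tail tends to `0`.
-/

open MeasureTheory Finset Filter Topology

section ProductIntegrals

variable {ι α : Type*} [Fintype ι] [MeasureSpace α] [SigmaFinite (volume : Measure α)]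

theorem integrableOn_univ_pi_prod {s : Set α} {g : ι → α → ℝ}
    (hg : ∀ i, IntegrableOn (g i) s) :
    IntegrableOn (fun v : ι → α => ∏ i, g i (v i)) (Set.univ.pi fun _ => s) := by
  rw [IntegrableOn, volume_pi, Measure.restrict_pi_pi]
  exact Integrable.fintype_prod hg

theorem setIntegral_univ_pi_prod (s : Set α) (g : ι → α → ℝ) :
    ∫ v in Set.univ.pi (fun _ => s), ∏ i, g i (v i) = ∏ i, ∫ x in s, g i x := by
  rw [volume_pi, Measure.restrict_pi_pi, integral_fintype_prod_eq_prod]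

theorem setIntegral_univ_pi_prod_ite [DecidableEq ι] (s : Set α) (S : Finset ι) (a b : α → ℝ) :
    ∫ v in Set.univ.pi (fun _ => s), ∏ i, (if i ∈ S then a (v i) else b (v i))
      = (∫ x in s, a x) ^ #S * (∫ x in s, b x) ^ #Sᶜ := by
  have h := setIntegral_univ_pi_prod s fun i => if i ∈ S then a else b
  have hfactor (i : ι) : ∫ x in s, (if i ∈ S then a else b) x
      = if i ∈ S then ∫ x in s, a x else ∫ x in s, b x := by
    split_ifs <;> rfl
  simp only [hfactor] at h
  simp only [ite_apply] at h
  rw [h, prod_ite, prod_const, prod_const]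
  congr 3 <;> ext <;> simp

end ProductIntegrals

theorem prod_le_sum_powersetCard_ite {ι : Type*} [Fintype ι] [DecidableEq ι] {a b : ι → ℝ}
    (ha : ∀ i, 0 ≤ a i) (hb : ∀ i, 0 ≤ b i) {m : ℕ} (hm : m ≤ #{i | b i = a i}) :
    ∏ i, a i ≤ ∑ S ∈ powersetCard m univ, ∏ i, (if i ∈ S then b i else a i) := by
  obtain ⟨S, hS, rfl⟩ := exists_subset_card_eq hm
  calc ∏ i, a i = ∏ i, (if i ∈ S then b i else a i) :=
        prod_congr rfl fun i _ => by
          split_ifs with hi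
          · exact ((mem_filter.1 (hS hi)).2).symm
          · rfl
    _ ≤ _ := single_le_sum (f := fun T => ∏ i, (if i ∈ T then b i else a i))
        (fun T _ => prod_nonneg fun i _ => by split_ifs; exacts [hb i, ha i])
        (mem_powersetCard.2 ⟨subset_univ S, rfl⟩)

section SingleDeadline

variable {n : ℕ} {d : ℝ} {v : Fin n → ℝ}

theorem releaseTime_nonneg (hd0 : 0 ≤ d) (hd1 : d ≤ 1) (i : Fin n) :
    0 ≤ releaseTime d v i := by
  unfold releaseTime; split_ifs <;> linarith

theorem releaseTime_le_one (hd0 : 0 ≤ d) (hd1 : d ≤ 1) (i : Fin n) :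
    releaseTime d v i ≤ 1 := by
  unfold releaseTime; split_ifs <;> linarith

theorem releaseTime_le_of_hasFreePart {i : Fin n} (hd0 : 0 ≤ d) (h : hasFreePart d v i) :
    releaseTime d v i ≤ d := by
  unfold releaseTime; split_ifs <;> first | exact hd0 | exact le_rfl

theorem hasFreePart_of_lt_card {k : ℕ} {c : ℝ} (hd0 : 0 ≤ d) (hk : 1 ≤ k)
    (hkc : 1 / (k : ℝ) ≤ d * c) (hcard : k < #{j | c ≤ v j}) (i : Fin n) :
    hasFreePart d v i := by
  have hsub : ({j | c ≤ v j} : Finset (Fin n)).erase i ⊆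
      (univ.erase i).filter fun j => 1 / (k : ℝ) ≤ d * v j :=
    fun j hj => by
      obtain ⟨hji, hj⟩ := mem_erase.1 hj
      exact mem_filter.2 ⟨mem_erase.2 ⟨hji, mem_univ j⟩,
        hkc.trans (mul_le_mul_of_nonneg_left (mem_filter.1 hj).2 hd0)⟩
  have hwilling : k ≤ numWillingEx (fun j => d * v j) i k :=
    (Nat.le_sub_one_of_lt hcard).trans (pred_card_le_card_erase.trans (card_le_card hsub))
  have hkn : k ≤ n := hcard.le.trans ((card_filter_le _ _).trans (card_fin n).le)
  exact hk.trans (Nat.le_findGreatest hkn hwilling)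

theorem iSup_releaseTime_le_one (hd0 : 0 ≤ d) (hd1 : d ≤ 1) :
    ⨆ i, releaseTime d v i ≤ 1 :=
  Real.iSup_le (releaseTime_le_one hd0 hd1) zero_le_one

theorem iSup_releaseTime_le_of_lt_card {k : ℕ} {c : ℝ} (hd0 : 0 ≤ d) (hk : 1 ≤ k)
    (hkc : 1 / (k : ℝ) ≤ d * c) (hcard : k < #{j | c ≤ v j}) :
    ⨆ i, releaseTime d v i ≤ d :=
  Real.iSup_le (fun i => releaseTime_le_of_hasFreePart hd0
    (hasFreePart_of_lt_card hd0 hk hkc hcard i)) hd0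

end SingleDeadline

section DelayBound

variable {f : ℝ → ℝ} {n k : ℕ} {c d : ℝ}

theorem iSup_releaseTime_mul_prod_le {v : Fin n → ℝ} (hd0 : 0 ≤ d) (hd1 : d ≤ 1) (hk : 1 ≤ k)
    (hkc : 1 / (k : ℝ) ≤ d * c) (hf : ∀ i, 0 ≤ f (v i)) :
    (⨆ i, releaseTime d v i) * ∏ i, f (v i) ≤ d * ∏ i, f (v i) +
      ∑ S ∈ powersetCard (n - k) univ,
        ∏ i, (if i ∈ S then (Set.Iio c).indicator f (v i) else f (v i)) := by
  have hP : 0 ≤ ∏ i, f (v i) := prod_nonneg fun i _ => hf i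
  have hb (i : Fin n) : 0 ≤ (Set.Iio c).indicator f (v i) :=
    Set.indicator_apply_nonneg fun _ => hf i
  rcases lt_or_ge k #{j | c ≤ v j} with hgood | hbad
  · have hsum : 0 ≤ ∑ S ∈ powersetCard (n - k) univ,
        ∏ i, (if i ∈ S then (Set.Iio c).indicator f (v i) else f (v i)) :=
      sum_nonneg fun S _ => prod_nonneg fun i _ => by split_ifs; exacts [hb i, hf i]
    calc _ ≤ d * ∏ i, f (v i) :=
          mul_le_mul_of_nonneg_right (iSup_releaseTime_le_of_lt_card hd0 hk hkc hgood) hP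
      _ ≤ _ := le_add_of_nonneg_right hsum
  · have hlow : n - k ≤ #{i | (Set.Iio c).indicator f (v i) = f (v i)} := by
      have hsplit := card_filter_add_card_filter_not (s := univ) (p := fun j => c ≤ v j)
      rw [card_univ, Fintype.card_fin] at hsplit
      refine (by omega : n - k ≤ #{j | ¬ c ≤ v j}).trans (card_le_card fun j hj => ?_)
      rw [mem_filter, not_le] at hj
      exact mem_filter.2 ⟨hj.1, Set.indicator_of_mem (Set.mem_Iio.2 hj.2) f⟩
    calc _ ≤ 1 * ∏ i, f (v i) := mul_le_mul_of_nonneg_right (iSup_releaseTime_le_one hd0 hd1) hP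
      _ ≤ ∑ S ∈ powersetCard (n - k) univ,
            ∏ i, (if i ∈ S then (Set.Iio c).indicator f (v i) else f (v i)) :=
          (one_mul _).trans_le (prod_le_sum_powersetCard_ite hf hb hlow)
      _ ≤ _ := le_add_of_nonneg_left (mul_nonneg hd0 hP)

theorem expectedMaxDelay_le (hf0 : ∀ x ∈ Set.Icc (0 : ℝ) 1, 0 ≤ f x)
    (hfint : IntegrableOn f (Set.Icc 0 1)) (hf1 : ∫ x in Set.Icc (0 : ℝ) 1, f x = 1)
    (hd0 : 0 ≤ d) (hd1 : d ≤ 1) (hk : 1 ≤ k) (hkc : 1 / (k : ℝ) ≤ d * c) :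
    expectedMaxDelay f n d ≤ d + n.choose (n - k) *
      (∫ x in Set.Icc (0 : ℝ) 1, (Set.Iio c).indicator f x) ^ (n - k) := by
  have hbox : MeasurableSet (Set.univ.pi fun _ : Fin n => Set.Icc (0 : ℝ) 1) :=
    .univ_pi fun _ => measurableSet_Icc
  have hfbox : ∀ v ∈ Set.univ.pi fun _ : Fin n => Set.Icc (0 : ℝ) 1, ∀ i, 0 ≤ f (v i) :=
    fun v hv i => hf0 _ (hv i (Set.mem_univ i))
  have hP : IntegrableOn (fun v : Fin n → ℝ => ∏ i, f (v i))
      (Set.univ.pi fun _ => Set.Icc (0 : ℝ) 1) :=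
    integrableOn_univ_pi_prod fun _ => hfint
  have hterm (S : Finset (Fin n)) : IntegrableOn
      (fun v : Fin n → ℝ => ∏ i, (if i ∈ S then (Set.Iio c).indicator f (v i) else f (v i)))
      (Set.univ.pi fun _ => Set.Icc (0 : ℝ) 1) :=
    integrableOn_univ_pi_prod (g := fun i x => if i ∈ S then (Set.Iio c).indicator f x else f x)
      fun i => by split_ifs; exacts [hfint.indicator measurableSet_Iio, hfint]
  have hterms := integrable_finsetSum (powersetCard (n - k) univ) fun S _ => hterm S
  have hterm_eq : ∀ S ∈ powersetCard (n - k) (univ : Finset (Fin n)),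
      ∫ v in Set.univ.pi fun _ => Set.Icc (0 : ℝ) 1,
        ∏ i, (if i ∈ S then (Set.Iio c).indicator f (v i) else f (v i)) =
        (∫ x in Set.Icc (0 : ℝ) 1, (Set.Iio c).indicator f x) ^ (n - k) := fun S hS => by
    rw [setIntegral_univ_pi_prod_ite, hf1, one_pow, mul_one, (mem_powersetCard.1 hS).2]
  calc expectedMaxDelay f n d
      ≤ ∫ v in Set.univ.pi fun _ => Set.Icc (0 : ℝ) 1,
          (d * ∏ i, f (v i) + ∑ S ∈ powersetCard (n - k) univ,
            ∏ i, (if i ∈ S then (Set.Iio c).indicator f (v i) else f (v i))) :=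
        integral_mono_of_nonneg
          (ae_restrict_of_forall_mem hbox fun v hv => mul_nonneg
            (Real.iSup_nonneg (releaseTime_nonneg hd0 hd1)) (prod_nonneg fun i _ => hfbox v hv i))
          ((hP.const_mul d).add hterms)
          (ae_restrict_of_forall_mem hbox fun v hv =>
            iSup_releaseTime_mul_prod_le hd0 hd1 hk hkc (hfbox v hv))
    _ = _ := by
        rw [integral_add (hP.const_mul d) hterms, integral_const_mul,
          setIntegral_univ_pi_prod _ fun _ => f, integral_finsetSum _ fun S _ => hterm S,
          sum_congr rfl hterm_eq, hf1, prod_const_one, mul_one, sum_const, card_powersetCard,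
          card_univ, Fintype.card_fin, nsmul_eq_mul]

end DelayBound

theorem tendsto_choose_sub_mul_pow_sub_atTop {q : ℝ} (hq0 : 0 ≤ q) (hq1 : q < 1) (k : ℕ) :
    Tendsto (fun n : ℕ => (n.choose (n - k) : ℝ) * q ^ (n - k)) atTop (𝓝 0) := by
  -- pass to `r ≥ q` with `r > 0`, so that `r ^ (n - k) = r ^ n / r ^ k`
  set r := max q (1 / 2)
  have hr0 : 0 < r := lt_max_of_lt_right one_half_pos
  have hr1 : |r| < 1 := by rw [abs_of_pos hr0]; exact max_lt hq1 one_half_lt_one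
  have hlim := (tendsto_pow_const_mul_const_pow_of_abs_lt_one k hr1).mul_const (r ^ k)⁻¹
  rw [zero_mul] at hlim
  refine squeeze_zero' (Eventually.of_forall fun n => by positivity) ?_ hlim
  filter_upwards [eventually_ge_atTop k] with n hn
  calc (n.choose (n - k) : ℝ) * q ^ (n - k) ≤ (n : ℝ) ^ k * r ^ (n - k) := by
        rw [Nat.choose_symm hn]
        exact mul_le_mul (by exact_mod_cast Nat.choose_le_pow n k)
          (pow_le_pow_left₀ hq0 (le_max_left _ _) _) (by positivity) (by positivity)
    _ = (n : ℝ) ^ k * r ^ n * (r ^ k)⁻¹ := by rw [pow_sub₀ r hr0.ne' hn]; ring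

theorem setIntegral_Icc_indicator_Iio_lt {f : ℝ → ℝ} (hf : ∀ x ∈ Set.Icc (0 : ℝ) 1, 0 < f x)
    (hfint : IntegrableOn f (Set.Icc 0 1)) {c : ℝ} (hc0 : 0 ≤ c) (hc1 : c < 1) :
    ∫ x in Set.Icc (0 : ℝ) 1, (Set.Iio c).indicator f x < ∫ x in Set.Icc (0 : ℝ) 1, f x := by
  have hdiff : Set.Icc (0 : ℝ) 1 \ Set.Iio c = Set.Icc c 1 := by
    ext x
    simp only [Set.mem_sdiff, Set.mem_Icc, Set.mem_Iio, not_lt]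
    grind
  rw [integral_indicator measurableSet_Iio, Measure.restrict_restrict measurableSet_Iio,
    Set.inter_comm, ← integral_inter_add_sdiff measurableSet_Iio hfint, hdiff,
    lt_add_iff_pos_right, integral_Icc_eq_integral_Ioc,
    ← intervalIntegral.integral_of_le hc1.le]
  refine intervalIntegral.intervalIntegral_pos_of_pos_on ?_
    (fun x hx => hf x ⟨hc0.trans hx.1.le, hx.2.le⟩) hc1
  exact (intervalIntegrable_iff_integrableOn_Icc_of_le hc1.le).2
    (hfint.mono_set (Set.Icc_subset_Icc hc0 le_rfl))

theorem stmt8_general (f : ℝ → ℝ)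
    (hpos : ∀ x ∈ Set.Icc (0:ℝ) 1, 0 < f x)
    (hdens : ∫ x in (0:ℝ)..1, f x = 1) :
    ∀ ε > 0, ∃ d : ℝ, 0 < d ∧ d ≤ ε ∧
      ∃ N : ℕ, ∀ n ≥ N, expectedMaxDelay f n d ≤ ε := by
  intro ε hε
  have hf1 : ∫ x in Set.Icc (0 : ℝ) 1, f x = 1 := by
    rwa [integral_Icc_eq_integral_Ioc, ← intervalIntegral.integral_of_le zero_le_one]
  -- `f` is integrable, since otherwise its integral would be `0`
  have hfint : IntegrableOn f (Set.Icc 0 1) :=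
    .of_integral_ne_zero (by rw [hf1]; exact one_ne_zero)
  obtain ⟨d, hd0, hdε, hd1⟩ : ∃ d : ℝ, 0 < d ∧ d ≤ ε / 2 ∧ d ≤ 1 :=
    ⟨min ε 1 / 2, by positivity, by linarith [min_le_left ε 1], by linarith [min_le_right ε 1]⟩
  obtain ⟨k, hk, hkc⟩ : ∃ k : ℕ, 1 ≤ k ∧ 1 / (k : ℝ) ≤ d * (1 / 2) := by
    refine ⟨⌈2 / d⌉₊, Nat.one_le_iff_ne_zero.2 (Nat.ceil_pos.2 (by positivity)).ne', ?_⟩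
    have h2k : 2 / d ≤ ⌈2 / d⌉₊ := Nat.le_ceil _
    rw [div_le_iff₀ hd0] at h2k
    rw [div_le_iff₀ (by positivity)]
    linarith
  set q := ∫ x in Set.Icc (0 : ℝ) 1, (Set.Iio (1 / 2 : ℝ)).indicator f x
  have hq0 : 0 ≤ q := setIntegral_nonneg measurableSet_Icc fun x hx =>
    Set.indicator_apply_nonneg fun _ => (hpos x hx).le
  have hq1 : q < 1 := hf1 ▸ setIntegral_Icc_indicator_Iio_lt hpos hfint (by norm_num) (by norm_num)
  obtain ⟨N, hN⟩ := eventually_atTop.1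
    ((tendsto_choose_sub_mul_pow_sub_atTop hq0 hq1 k).eventually_le_const (half_pos hε))
  refine ⟨d, hd0, by linarith, N, fun n hn => ?_⟩
  calc expectedMaxDelay f n d ≤ d + n.choose (n - k) * q ^ (n - k) :=
        expectedMaxDelay_le (fun x hx => (hpos x hx).le) hfint hf1 hd0.le hd1 hk hkc
    _ ≤ ε := by linarith [hN n hn]

/-- The optimal single deadline mechanism's expected max-delay
approaches `0` as the number of agents approaches infinity: for every `ε > 0`,
there is a deadline `d ≤ ε` and `N` such that for all `n ≥ N` the mechanism
`M(d)` with `n` agents has expected max-delay at most `ε`. -/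
theorem stmt8 (f : ℝ → ℝ)
    (hpos : ∀ x ∈ Set.Icc (0:ℝ) 1, 0 < f x)
    (K : NNReal) (hLip : LipschitzOnWith K f (Set.Icc 0 1))
    (hdens : ∫ x in (0:ℝ)..1, f x = 1) :
    ∀ ε > 0, ∃ d : ℝ, 0 < d ∧ d ≤ ε ∧
      ∃ N : ℕ, ∀ n ≥ N, expectedMaxDelay f n d ≤ ε :=
  stmt8_general f hpos hdens
end

section
/- The single deadline mechanism M(d) is strategy-proof and individually rational: no agent can increase her utility vᵢ(1 - tᵢ) - pᵢ by misreporting her valuation, and truthful reporting yields nonnegative utility. -/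
open scoped Classical

/-!
Agent `i`'s utility splits into a non-free and a free part. She gets the free part iff the
other agents alone can cost share, which her report cannot affect. For the non-free part she
faces a posted price `1/K'`, where `K'` is the value `K(d·v)` would take if she were willing
to pay anything: she consumes iff `d·vᵢ ≥ 1/K'`, and then `K(d·v) = K'`, so she pays `1/K'`.
Truthful reporting therefore earns `max (d·vᵢ - 1/K') 0` on the non-free part, which dominates
every misreport and is nonnegative.
-/

section

variable {n : ℕ}

lemma numWilling_mono {w w' : Fin n → ℝ} {k : ℕ}
    (h : ∀ j, 1 / (k : ℝ) ≤ w j → 1 / (k : ℝ) ≤ w' j) :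
    numWilling w k ≤ numWilling w' k :=
  Finset.card_le_card (Finset.monotone_filter_right _ fun j _ => h j)

lemma Kval_le_numWilling (w : Fin n → ℝ) : Kval w ≤ numWilling w (Kval w) :=
  Nat.findGreatest_spec (P := fun k => k ≤ numWilling w k) (Nat.zero_le n) (Nat.zero_le _)

lemma le_Kval {w : Fin n → ℝ} {k : ℕ} (hk : k ≤ n) (h : k ≤ numWilling w k) :
    k ≤ Kval w :=
  Nat.le_findGreatest hk h

lemma one_le_Kval_update_one (w : Fin n → ℝ) (i : Fin n) :
    1 ≤ Kval (Function.update w i 1) := by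
  refine le_Kval i.pos (Finset.card_pos.mpr ⟨i, ?_⟩)
  simp

lemma Kval_le_Kval_update_one (w : Fin n → ℝ) (i : Fin n) :
    Kval w ≤ Kval (Function.update w i 1) := by
  refine Nat.findGreatest_mono_left (fun k hk => hk.trans (numWilling_mono fun j hj => ?_)) n
  rcases eq_or_ne j i with rfl | hji
  · -- every price `1/k` is at most `1`, also `1/0 = 0`
    simpa using Nat.cast_inv_le_one (α := ℝ) k
  · simpa [hji] using hj

lemma Kval_eq_of_one_div_Kval_update_one_le {w : Fin n → ℝ} {i : Fin n}
    (h : 1 / (Kval (Function.update w i 1) : ℝ) ≤ w i) :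
    Kval w = Kval (Function.update w i 1) := by
  refine le_antisymm (Kval_le_Kval_update_one w i) (le_Kval (Nat.findGreatest_le n) ?_)
  refine (Kval_le_numWilling _).trans (numWilling_mono fun j hj => ?_)
  rcases eq_or_ne j i with rfl | hji
  · exact h
  · simpa [hji] using hj

noncomputable def postedPrice (w : Fin n → ℝ) (i : Fin n) : ℝ :=
  1 / (Kval (Function.update w i 1) : ℝ)

lemma postedPrice_update (w : Fin n → ℝ) (i : Fin n) (x : ℝ) :
    postedPrice (Function.update w i x) i = postedPrice w i := by
  simp only [postedPrice, Function.update_idem]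

lemma one_le_Kval_and_one_div_Kval_le_iff {w : Fin n → ℝ} {i : Fin n} :
    (1 ≤ Kval w ∧ 1 / (Kval w : ℝ) ≤ w i) ↔ postedPrice w i ≤ w i := by
  constructor
  · rintro ⟨hK, hwi⟩
    have hKpos : (0 : ℝ) < Kval w := by exact_mod_cast hK
    refine le_trans (one_div_le_one_div_of_le hKpos ?_) hwi
    exact_mod_cast Kval_le_Kval_update_one w i
  · intro h
    rw [Kval_eq_of_one_div_Kval_update_one_le h]
    exact ⟨one_le_Kval_update_one w i, h⟩

lemma one_div_Kval_eq_postedPrice {w : Fin n → ℝ} {i : Fin n} (h : postedPrice w i ≤ w i) :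
    1 / (Kval w : ℝ) = postedPrice w i := by
  rw [Kval_eq_of_one_div_Kval_update_one_le h, postedPrice]

lemma numWillingEx_update (w : Fin n → ℝ) (i : Fin n) (x : ℝ) (k : ℕ) :
    numWillingEx (Function.update w i x) i k = numWillingEx w i k := by
  refine congrArg Finset.card (Finset.filter_congr fun j hj => ?_)
  rw [Function.update_of_ne (Finset.ne_of_mem_erase hj)]

lemma KvalEx_update (w : Fin n → ℝ) (i : Fin n) (x : ℝ) :
    KvalEx (Function.update w i x) i = KvalEx w i := by
  simp only [KvalEx, numWillingEx_update]

section Mechanism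

variable (d : ℝ) (v : Fin n → ℝ) (i : Fin n)

lemma const_mul_update (x : ℝ) :
    (fun j => d * Function.update v i x j) = Function.update (fun j => d * v j) i (d * x) :=
  Function.comp_update (d * ·) v i x

lemma nonfreeConsumer_iff :
    nonfreeConsumer d v i ↔ postedPrice (fun j => d * v j) i ≤ d * v i :=
  one_le_Kval_and_one_div_Kval_le_iff

lemma payment_eq :
    payment d v i =
      if postedPrice (fun j => d * v j) i ≤ d * v i then postedPrice (fun j => d * v j) i
      else 0 := by
  by_cases h : nonfreeConsumer d v i
  · have hp := (nonfreeConsumer_iff d v i).mp h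
    rw [payment, if_pos h, if_pos hp, one_div_Kval_eq_postedPrice hp]
  · rw [payment, if_neg h, if_neg (mt (nonfreeConsumer_iff d v i).mpr h)]

lemma utility_eq (a : ℝ) :
    a * (1 - releaseTime d v i) - payment d v i =
      (if postedPrice (fun j => d * v j) i ≤ d * v i
        then a * d - postedPrice (fun j => d * v j) i else 0) +
      (if hasFreePart d v i then a * (1 - d) else 0) := by
  simp only [releaseTime, payment_eq, nonfreeConsumer_iff]
  split_ifs <;> ring

lemma postedPrice_const_mul_update (x : ℝ) :
    postedPrice (fun j => d * Function.update v i x j) i = postedPrice (fun j => d * v j) i := by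
  rw [const_mul_update, postedPrice_update]

lemma hasFreePart_update (x : ℝ) :
    hasFreePart d (Function.update v i x) i ↔ hasFreePart d v i := by
  rw [hasFreePart, hasFreePart, const_mul_update, KvalEx_update]

end Mechanism

end

/-- The single deadline mechanism `M(d)` is strategy-proof and
individually rational: no agent can increase her utility `vᵢ(1 - tᵢ) - pᵢ` by
misreporting, and truthful reporting yields nonnegative utility. -/
theorem stmt13 {n : ℕ} (d : ℝ) (hd : d ∈ Set.Icc (0:ℝ) 1)
    (v : Fin n → ℝ) (hv : ∀ i, v i ∈ Set.Icc (0:ℝ) 1) (i : Fin n) :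
    (∀ v' ∈ Set.Icc (0:ℝ) 1,
      v i * (1 - releaseTime d (Function.update v i v') i)
          - payment d (Function.update v i v') i
        ≤ v i * (1 - releaseTime d v i) - payment d v i) ∧
    0 ≤ v i * (1 - releaseTime d v i) - payment d v i := by
  obtain ⟨-, hd1⟩ := hd
  obtain ⟨hvi, -⟩ := hv i
  set p := postedPrice (fun j => d * v j) i
  have free_nonneg : 0 ≤ if hasFreePart d v i then v i * (1 - d) else 0 := by
    split_ifs
    exacts [mul_nonneg hvi (sub_nonneg.mpr hd1), le_rfl]
  rw [utility_eq]
  refine ⟨fun x _ => ?_, ?_⟩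
  · rw [utility_eq, postedPrice_const_mul_update, hasFreePart_update, Function.update_self]
    gcongr ?_ + _
    split_ifs <;> nlinarith
  · split_ifs <;> nlinarith
end

section
/- Under the Bernoulli(1/2) valuation distribution (each agent's valuation is 0 or 1 with probability 1/2 each), the serial cost sharing mechanism's expected number of consumers is at most n/2 + 1, while the sequential take-it-or-leave-it mechanism (offer cost 1 to agents one by one until one accepts, then all subsequent agents consume for free) has expected number of consumers at least n - 2. -/
/-!
Flipping every valuation is a bijection of `Fin n → Bool` that exchanges the agents reporting `1`
with those reporting `0`, so the serial mechanism serves exactly `n / 2` agents on average.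
For the sequential mechanism, split on the first agent: if she accepts, all `n` agents consume;
if she declines, the remaining `n - 1` agents face the same mechanism. Hence the consumer counts
sum to `(n - 1) 2ⁿ + 1`, an expectation of `n - 1 + 2⁻ⁿ`.
-/

/-- Number of consumers under the sequential take-it-or-leave-it mechanism with
Bernoulli valuations `v : Fin n → Bool`: the first agent with valuation `1`
accepts paying the full cost; she and all subsequent agents consume; agents
before her are excluded. If no agent values the project, nobody consumes. -/
def seqConsumers {n : ℕ} (v : Fin n → Bool) : ℕ :=
  if h : (Finset.univ.filter fun i : Fin n => v i = true).Nonempty then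
    n - ((Finset.univ.filter fun i : Fin n => v i = true).min' h).val
  else 0

open Finset

theorem Fin.sum_fun_succ {n : ℕ} {α M : Type*} [Fintype α] [AddCommMonoid M]
    (f : (Fin (n + 1) → α) → M) :
    ∑ v, f v = ∑ a, ∑ v : Fin n → α, f (Fin.cons a v) := by
  rw [← (Fin.consEquiv fun _ => α).sum_comp, Fintype.sum_prod_type]
  rfl

theorem two_mul_sum_card_filter_eq {ι : Type*} [Fintype ι] [DecidableEq ι] :
    2 * ∑ v : ι → Bool, #{i | v i = true} = Fintype.card ι * 2 ^ Fintype.card ι := by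
  have hnot : ∑ v : ι → Bool, #{i | v i = true} = ∑ v : ι → Bool, #{i | ¬ v i = true} :=
    Fintype.sum_bijective (not ∘ ·)
      (Function.Involutive.bijective fun v => by simp [Function.comp_def]) _ _ fun v => by simp
  rw [two_mul]
  nth_rw 2 [hnot]
  simp only [← sum_add_distrib, card_filter_add_card_filter_not, card_univ, sum_const,
    Fintype.card_fun, Fintype.card_bool, smul_eq_mul, mul_comm]

theorem filter_cons_false_eq_image_succ {n : ℕ} (v : Fin n → Bool) :
    univ.filter (fun i => (Fin.cons false v : Fin (n + 1) → Bool) i = true)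
      = (univ.filter fun i => v i = true).image Fin.succ := by
  ext i
  cases i using Fin.cases <;> simp

theorem seqConsumers_cons_true {n : ℕ} (v : Fin n → Bool) :
    seqConsumers (Fin.cons true v : Fin (n + 1) → Bool) = n + 1 := by
  have h0 : 0 ∈ univ.filter fun i => (Fin.cons true v : Fin (n + 1) → Bool) i = true := by
    simp
  rw [seqConsumers, dif_pos ⟨0, h0⟩, le_antisymm (min'_le _ _ h0) (Fin.zero_le _)]
  rfl

theorem seqConsumers_cons_false {n : ℕ} (v : Fin n → Bool) :
    seqConsumers (Fin.cons false v : Fin (n + 1) → Bool) = seqConsumers v := by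
  unfold seqConsumers
  simp_rw [filter_cons_false_eq_image_succ, image_nonempty]
  split_ifs with h
  · rw [min'_image Fin.strictMono_succ.monotone, Fin.val_succ, Nat.succ_sub_succ]
  · rfl

theorem sum_seqConsumers_add (n : ℕ) :
    ∑ v : Fin n → Bool, seqConsumers v + 2 ^ n = n * 2 ^ n + 1 := by
  induction n with
  | zero => rfl
  | succ n ih =>
    simp only [Fin.sum_fun_succ, Fintype.sum_bool, seqConsumers_cons_true,
      seqConsumers_cons_false, sum_const, card_univ, Fintype.card_fun, Fintype.card_bool,
      Fintype.card_fin, smul_eq_mul]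
    rw [pow_succ]
    linarith

/-- Under the Bernoulli(1/2) valuation distribution on `{0,1}`,
the serial cost sharing mechanism's expected number of consumers (the expected
number of agents reporting `1`) is at most `n/2 + 1`, while the sequential
take-it-or-leave-it mechanism has expected number of consumers at least `n - 2`. -/
theorem stmt18 (n : ℕ) :
    (∑ v : Fin n → Bool,
        ((1:ℝ) / 2 ^ n) *
          ((Finset.univ.filter fun i : Fin n => v i = true).card : ℝ))
      ≤ (n : ℝ) / 2 + 1 ∧
    (n : ℝ) - 2 ≤
      ∑ v : Fin n → Bool, ((1:ℝ) / 2 ^ n) * (seqConsumers v : ℝ) := by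
  have hcard : 2 * ∑ v : Fin n → Bool, (#{i | v i = true} : ℝ) = n * 2 ^ n := by
    exact_mod_cast Fintype.card_fin n ▸ two_mul_sum_card_filter_eq (ι := Fin n)
  have hseq : ∑ v : Fin n → Bool, (seqConsumers v : ℝ) + 2 ^ n = n * 2 ^ n + 1 := by
    exact_mod_cast sum_seqConsumers_add n
  have h2n : (0 : ℝ) < 2 ^ n := by positivity
  rw [← mul_sum, ← mul_sum, one_div, inv_mul_le_iff₀ h2n, le_inv_mul_iff₀ h2n]
  constructor <;> linarith
end
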